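/- arXiv:2402.00378 — 2 statements merged into one kernel-verified Lean document; each statement's English description precedes it below -/
import Mathlib

section
/- Let G be an (n,m)-superconcentrator of depth d with generator-matrix polynomial M, where M_{i,j} = Σ over paths p from input i to output j of Π_{e ∈ p} r_e, with indeterminates r_e for each edge e. Then for any equal-size subsets X ⊆ [n], Y ⊆ [m], the polynomial det(M_{X,Y}) is a nonzero polynomial of degree at most d·|X|, and hence for uniformly random coefficients over a finite field F, Pr[det(M_{X,Y}) = 0] ≤ d·|X|/|F|. -/
open scoped Classical

/-- `p` is a (nonempty) directed path from `a` to `b` in the digraph with edge relation `E`. -/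
def IsPathFromTo {V : Type*} (E : V → V → Prop) (p : List V) (a b : V) : Prop :=
  p.Chain' E ∧ p.head? = some a ∧ p.getLast? = some b

/-- A family of pairwise vertex-disjoint directed paths, one starting at each vertex of `S`,
each ending at a vertex of `T`. -/
def HasDisjointPathFamily {V : Type*} (E : V → V → Prop) (S T : Finset V) : Prop :=
  ∃ P : V → List V,
    (∀ s ∈ S, ∃ t ∈ T, IsPathFromTo E (P s) s t) ∧
    (∀ s ∈ S, ∀ s' ∈ S, s ≠ s' → ∀ v, v ∈ P s → v ∉ P s')

/-- `(n, m)`-superconcentrator. -/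
def IsSuperconcentrator {V : Type*} {n m : ℕ} (E : V → V → Prop)
    (inp : Fin n ↪ V) (out : Fin m ↪ V) : Prop :=
  ∀ (X : Finset (Fin n)) (Y : Finset (Fin m)), X.card = Y.card →
    HasDisjointPathFamily E (X.map inp) (Y.map out)

/-- The generator matrix with polynomial entries: one indeterminate `X e` per edge `e`, and
`M i j = Σ_{paths p : inp i → out j} Π_{e ∈ p} X e`. -/
noncomputable def genPolyMatrix {V F : Type*} [Field F] {n m : ℕ} (E : V → V → Prop)
    (inp : Fin n ↪ V) (out : Fin m ↪ V) :
    Matrix (Fin n) (Fin m) (MvPolynomial (V × V) F) :=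
  fun i j => ∑ᶠ p ∈ {p : List V | IsPathFromTo E p (inp i) (out j)},
    ((p.zip p.tail).map MvPolynomial.X).prod

/-! The entries of `M` are sums of monomials `∏_{e ∈ p} r_e` over paths `p` with at most `d`
edges, so `det M_{X,Y}` has total degree at most `d|X|`. For non-vanishing, take vertex-disjoint
paths from `X` to `Y` given by the superconcentrator property, made simple by cutting cycles, and
evaluate at the indicator of their edges. A path using only these edges and starting at an input
must follow the chosen path from that input (simple and disjoint paths leave no other choice of
successor), so the evaluated matrix is a permutation matrix and its determinant is `±1`. The
probability bound is then the Schwartz–Zippel lemma. -/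

namespace List

variable {V : Type*}

theorem isPrefix_of_forall_mem_zip_tail {Ed : Set (V × V)} :
    ∀ {p L : List V}, L.Nodup → (∀ u ∈ L, ∀ w, (u, w) ∈ Ed → (u, w) ∈ L.zip L.tail) →
      p.head? = L.head? → (∀ e ∈ p.zip p.tail, e ∈ Ed) → p <+: L
  | [], _, _, _, _, _ => nil_prefix
  | [x], L, _, _, hhead, _ => by
    obtain ⟨L', rfl⟩ : ∃ L', L = x :: L' := by
      cases L <;> simp_all
    exact ⟨L', rfl⟩
  | x :: w :: p, L, hL, hEd, hhead, hp => by
    obtain ⟨L', rfl⟩ : ∃ L', L = x :: L' := by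
      cases L <;> simp_all
    have hx : x ∉ L' := (nodup_cons.1 hL).1
    have hxw : (x, w) ∈ (x :: L').zip L' := hEd x mem_cons_self w (hp _ (by simp))
    obtain ⟨L'', rfl⟩ : ∃ L'', L' = w :: L'' := by
      cases L' with
      | nil => simp at hxw
      | cons y L'' =>
        simp only [zip_cons_cons, mem_cons, Prod.mk.injEq, true_and] at hxw
        rcases hxw with rfl | hxw
        · exact ⟨L'', rfl⟩
        · exact absurd (of_mem_zip hxw).1 hx
    refine (prefix_cons_inj x).2 (isPrefix_of_forall_mem_zip_tail (nodup_cons.1 hL).2 ?_ rfl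
      fun e he => hp e (mem_cons_of_mem _ he))
    intro u hu v huv
    have := hEd u (mem_cons_of_mem x hu) v huv
    simp only [tail_cons, zip_cons_cons, mem_cons, Prod.mk.injEq] at this
    rcases this with ⟨rfl, -⟩ | h
    · exact absurd hu hx
    · exact h

theorem IsPrefix.eq_of_getLast?_eq {p L : List V} (h : p <+: L) (hL : L.Nodup)
    (hlast : p.getLast? = L.getLast?) : p = L := by
  obtain ⟨t, rfl⟩ := h
  rcases eq_nil_or_concat' t with rfl | ⟨t', y, rfl⟩
  · exact (append_nil p).symm
  · rw [← append_assoc, getLast?_concat] at hlast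
    have hy : y ∈ p := mem_of_getLast? hlast
    exact absurd rfl ((nodup_append.1 hL).2.2 y hy y (by simp))

end List

namespace IsPathFromTo

variable {V : Type*} {E : V → V → Prop} {p : List V} {a b : V}

theorem last_mem (h : IsPathFromTo E p a b) : b ∈ p := List.mem_of_getLast? h.2.2

theorem exists_nodup_subset :
    ∀ {p : List V} {a b : V}, IsPathFromTo E p a b → ∃ q, IsPathFromTo E q a b ∧ q.Nodup ∧ q ⊆ p
  | [], _, _, h => by simp [IsPathFromTo] at h
  | [x], _, _, h => ⟨[x], h, List.nodup_singleton x, List.Subset.refl _⟩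
  | x :: c :: p, a, b, ⟨hchain, hhead, hlast⟩ => by
    obtain rfl : x = a := by simpa using hhead
    obtain ⟨hxc, hchain⟩ := List.isChain_cons_cons.1 hchain
    obtain ⟨q, hq, hnd, hsub⟩ := exists_nodup_subset (p := c :: p) ⟨hchain, rfl, hlast⟩
    by_cases hx : x ∈ q
    · obtain ⟨l, r, rfl⟩ := List.append_of_mem hx
      refine ⟨x :: r, ⟨hq.1.suffix (List.suffix_append l _), rfl, ?_⟩,
        hnd.sublist (List.sublist_append_right l _), fun v hv => ?_⟩
      · rw [← hq.2.2, List.getLast?_append_of_ne_nil _ (List.cons_ne_nil x r)]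
      · exact List.mem_cons_of_mem x (hsub (List.mem_append_right l hv))
    · obtain ⟨q', rfl⟩ : ∃ q', q = c :: q' := by
        obtain ⟨-, hqh, -⟩ := hq
        cases q <;> simp_all
      refine ⟨x :: c :: q', ⟨List.IsChain.cons_cons hxc hq.1, rfl, hq.2.2⟩,
        List.nodup_cons.2 ⟨hx, hnd⟩, List.cons_subset_cons x hsub⟩

end IsPathFromTo

theorem IsSuperconcentrator.exists_disjoint_nodup_paths {V : Type*} {n m k : ℕ}
    {E : V → V → Prop} {inp : Fin n ↪ V} {out : Fin m ↪ V} (hsc : IsSuperconcentrator E inp out)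
    {X : Fin k → Fin n} {Y : Fin k → Fin m} (hX : Function.Injective X)
    (hY : Function.Injective Y) :
    ∃ (q : Fin k → List V) (σ : Equiv.Perm (Fin k)),
      (∀ i, IsPathFromTo E (q i) (inp (X i)) (out (Y (σ i))) ∧ (q i).Nodup) ∧
        Pairwise fun i i' => (q i).Disjoint (q i') := by
  obtain ⟨P, hpath, hdisjP⟩ := hsc (Finset.univ.map ⟨X, hX⟩) (Finset.univ.map ⟨Y, hY⟩) (by simp)
  have hmem (i : Fin k) : inp (X i) ∈ (Finset.univ.map ⟨X, hX⟩).map inp := by simp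
  have hq (i : Fin k) : ∃ j q, IsPathFromTo E q (inp (X i)) (out (Y j)) ∧ q.Nodup ∧
      q ⊆ P (inp (X i)) := by
    obtain ⟨t, ht, hPt⟩ := hpath _ (hmem i)
    obtain ⟨j, rfl⟩ : ∃ j, out (Y j) = t := by simpa using ht
    exact ⟨j, hPt.exists_nodup_subset⟩
  choose g q hq using hq
  have hdisj : Pairwise fun i i' => (q i).Disjoint (q i') := fun i i' hii' v hv hv' =>
    hdisjP _ (hmem i) _ (hmem i') (fun h => hii' (hX (inp.injective h))) v
      ((hq i).2.2 hv) ((hq i').2.2 hv')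
  have hg : Function.Injective g := fun i i' hgi => by
    by_contra hii'
    exact hdisj hii' (hq i).1.last_mem (hgi ▸ (hq i').1.last_mem)
  exact ⟨q, Equiv.ofBijective g (Finite.injective_iff_bijective.1 hg),
    fun i => ⟨(hq i).1, (hq i).2.1⟩, hdisj⟩

theorem setOf_isPathFromTo_edges_subset_eq_ite {V : Type*} {E : V → V → Prop} {k : ℕ}
    {a b : Fin k → V} (q : Fin k → List V) (σ : Equiv.Perm (Fin k))
    (hq : ∀ i, IsPathFromTo E (q i) (a i) (b (σ i)) ∧ (q i).Nodup)
    (hdisj : Pairwise fun i i' => (q i).Disjoint (q i')) (i j : Fin k) :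
    {p : List V | IsPathFromTo E p (a i) (b j) ∧
        ∀ e ∈ p.zip p.tail, e ∈ {e | ∃ i, e ∈ (q i).zip (q i).tail}} =
      if σ i = j then {q i} else ∅ := by
  have hstay : ∀ u ∈ q i, ∀ w, (u, w) ∈ {e | ∃ i, e ∈ (q i).zip (q i).tail} →
      (u, w) ∈ (q i).zip (q i).tail := by
    rintro u hu w ⟨i', hi'⟩
    obtain rfl : i' = i := by
      by_contra h
      exact hdisj h (List.of_mem_zip hi').1 hu
    exact hi'
  ext p
  constructor
  · rintro ⟨hp, hpEd⟩
    have hpre : p <+: q i := List.isPrefix_of_forall_mem_zip_tail (hq i).2 hstay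
      (by rw [hp.2.1, (hq i).1.2.1]) hpEd
    obtain rfl : σ i = j := by
      obtain rfl : σ.symm j = i := by
        by_contra h
        exact hdisj h (by simpa using (hq (σ.symm j)).1.last_mem) (hpre.subset hp.last_mem)
      exact σ.apply_symm_apply j
    rw [if_pos rfl]
    exact hpre.eq_of_getLast?_eq (hq i).2 (by rw [hp.2.2, (hq i).1.2.2])
  · split_ifs with hσ
    · rintro rfl
      exact ⟨hσ ▸ (hq i).1, fun e he => ⟨i, he⟩⟩
    · rintro ⟨⟩

namespace MvPolynomial

theorem totalDegree_det_le {ι σ R : Type*} [Fintype ι] [DecidableEq ι] [CommRing R]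
    (A : Matrix ι ι (MvPolynomial σ R)) {d : ℕ} (h : ∀ i j, (A i j).totalDegree ≤ d) :
    A.det.totalDegree ≤ d * Fintype.card ι := by
  rw [Matrix.det_apply]
  refine totalDegree_finsetSum_le fun τ _ => (totalDegree_smul_le _ _).trans ?_
  calc (∏ i, A (τ i) i).totalDegree ≤ ∑ i, (A (τ i) i).totalDegree := totalDegree_finsetProd _ _
    _ ≤ ∑ _i : ι, d := Finset.sum_le_sum fun i _ => h _ _
    _ = d * Fintype.card ι := by simp [mul_comm]

theorem totalDegree_prod_X_le {σ R : Type*} [CommSemiring R] (l : List σ) :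
    ((l.map X).prod : MvPolynomial σ R).totalDegree ≤ l.length := by
  induction l with
  | nil => simp
  | cons a l ih =>
    rw [List.map_cons, List.prod_cons, List.length_cons, add_comm]
    have hX : (X a : MvPolynomial σ R).totalDegree ≤ 1 :=
      (totalDegree_monomial_le _ _).trans (by simp)
    exact (totalDegree_mul _ _).trans (add_le_add hX ih)

theorem eval_prod_X_indicator {σ R : Type*} [CommSemiring R] (S : Set σ) (l : List σ) :
    eval (S.indicator 1) ((l.map X).prod : MvPolynomial σ R) =
      if ∀ s ∈ l, s ∈ S then 1 else 0 := by
  induction l with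
  | nil => simp
  | cons a l ih =>
    rw [List.map_cons, List.prod_cons, map_mul, eval_X, ih]
    by_cases ha : a ∈ S <;> simp [ha]

theorem card_zeros_div_card_le {σ F : Type*} [Fintype σ] [DecidableEq σ] [Field F] [Fintype F]
    {p : MvPolynomial σ F} (hp : p ≠ 0) :
    ((Finset.univ.filter fun r : σ → F => eval r p = 0).card : ℝ) / Fintype.card (σ → F) ≤
      p.totalDegree / Fintype.card F := by
  set e := Fintype.equivFin σ
  have hp' : rename e p ≠ 0 := (map_ne_zero_iff _ (rename_injective _ e.injective)).2 hp
  have hsz := schwartz_zippel_totalDegree hp' Finset.univ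
  have hdeg : (rename e p).totalDegree = p.totalDegree := totalDegree_renameEquiv e p
  rw [Fintype.piFinset_univ, hdeg] at hsz
  have hcard : (Finset.univ.filter fun f : Fin (Fintype.card σ) → F => eval f (rename e p) = 0).card
      = (Finset.univ.filter fun r : σ → F => eval r p = 0).card := by
    refine Finset.card_equiv (e.arrowCongr (Equiv.refl F)).symm fun f => ?_
    simp only [Finset.mem_filter, Finset.mem_univ, true_and, eval_rename]; rfl
  rw [hcard] at hsz
  have := NNRat.cast_le (K := ℝ) |>.2 hsz
  simpa [Fintype.card_fun] using this

end MvPolynomial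

noncomputable def pathPoly (R : Type*) [CommSemiring R] {V : Type*} (E : V → V → Prop) (a b : V) :
    MvPolynomial (V × V) R :=
  ∑ᶠ p ∈ {p : List V | IsPathFromTo E p a b}, ((p.zip p.tail).map MvPolynomial.X).prod

section PathPoly

open MvPolynomial

variable {V : Type*} [Finite V] {E : V → V → Prop} {d : ℕ}
  (hdepth : ∀ (p : List V) (a b : V), IsPathFromTo E p a b → p.length ≤ d + 1)
include hdepth

theorem finite_setOf_isPathFromTo (a b : V) : {p : List V | IsPathFromTo E p a b}.Finite :=
  (List.finite_length_le V (d + 1)).subset fun p hp => hdepth p a b hp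

theorem totalDegree_pathPoly_le {R : Type*} [CommSemiring R] (a b : V) : (pathPoly R E a b).totalDegree ≤ d := by
  rw [pathPoly, finsum_mem_eq_finite_toFinset_sum _ (finite_setOf_isPathFromTo hdepth a b)]
  refine totalDegree_finsetSum_le fun p hp => (totalDegree_prod_X_le _).trans ?_
  have := hdepth p a b (by simpa using hp)
  simp only [List.length_zip, List.length_tail]
  omega

theorem eval_pathPoly_indicator {R : Type*} [CommSemiring R] (Ed : Set (V × V)) (a b : V) :
    eval (Ed.indicator 1) (pathPoly R E a b) =
      {p : List V | IsPathFromTo E p a b ∧ ∀ e ∈ p.zip p.tail, e ∈ Ed}.ncard := by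
  have hfin := finite_setOf_isPathFromTo hdepth a b
  rw [pathPoly, finsum_mem_eq_finite_toFinset_sum _ hfin, map_sum]
  simp_rw [eval_prod_X_indicator, Finset.sum_boole]
  rw [← Set.ncard_coe_finset]
  congr 2
  ext p
  simp

theorem det_pathPoly_ne_zero {R : Type*} [CommRing R] [Nontrivial R] {k : ℕ} {a b : Fin k → V} (q : Fin k → List V)
    (σ : Equiv.Perm (Fin k)) (hq : ∀ i, IsPathFromTo E (q i) (a i) (b (σ i)) ∧ (q i).Nodup)
    (hdisj : Pairwise fun i i' => (q i).Disjoint (q i')) :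
    (Matrix.of fun i j => pathPoly R E (a i) (b j)).det ≠ 0 := by
  set Ed : Set (V × V) := {e | ∃ i, e ∈ (q i).zip (q i).tail}
  have heval : (Matrix.of fun i j => pathPoly R E (a i) (b j)).map
      (eval (Ed.indicator 1)) = σ.permMatrix R := by
    ext i j
    rw [Matrix.map_apply, Matrix.of_apply, eval_pathPoly_indicator hdepth,
      setOf_isPathFromTo_edges_subset_eq_ite q σ hq hdisj]
    split_ifs with h <;> simp [Equiv.Perm.permMatrix, PEquiv.toMatrix_apply, h]
  intro h0
  have := congrArg (eval (Ed.indicator (1 : V × V → R))) h0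
  rw [RingHom.map_det, RingHom.mapMatrix_apply, heval, Matrix.det_permutation, map_zero] at this
  rcases Int.units_eq_one_or (Equiv.Perm.sign σ) with h | h <;> simp [h] at this

end PathPoly

/-- For an `(n,m)`-superconcentrator of depth `d` and any equal-size subsets `X`, `Y` of
inputs and outputs, `det(M_{X,Y})` is a nonzero polynomial of total degree at most `d|X|`,
so uniformly random coefficients make it vanish with probability at most `d|X|/|F|`. -/
theorem stmt_14 {V F : Type*} [Field F] [Fintype F] [Fintype V] {n m d : ℕ}
    (E : V → V → Prop) (inp : Fin n ↪ V) (out : Fin m ↪ V)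
    (hsc : IsSuperconcentrator E inp out)
    (hdepth : ∀ (p : List V) (a b : V), IsPathFromTo E p a b → p.length ≤ d + 1)
    (k : ℕ) (X : Fin k → Fin n) (Y : Fin k → Fin m)
    (hX : Function.Injective X) (hY : Function.Injective Y) :
    ((genPolyMatrix E inp out (F := F)).submatrix X Y).det ≠ 0 ∧
    ((genPolyMatrix E inp out (F := F)).submatrix X Y).det.totalDegree ≤ d * k ∧
    ((Finset.univ.filter (fun r : V × V → F =>
        MvPolynomial.eval r ((genPolyMatrix E inp out (F := F)).submatrix X Y).det = 0)).card : ℝ) /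
      (Fintype.card (V × V → F)) ≤ (d * k : ℝ) / (Fintype.card F) := by
  have hmat : (genPolyMatrix E inp out (F := F)).submatrix X Y =
      Matrix.of fun i j => pathPoly F E (inp (X i)) (out (Y j)) := rfl
  have hne : ((genPolyMatrix E inp out (F := F)).submatrix X Y).det ≠ 0 := by
    obtain ⟨q, σ, hq, hdisj⟩ := hsc.exists_disjoint_nodup_paths hX hY
    exact hmat ▸ det_pathPoly_ne_zero hdepth q σ hq hdisj
  have hdeg : ((genPolyMatrix E inp out (F := F)).submatrix X Y).det.totalDegree ≤ d * k := by
    rw [hmat]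
    exact (MvPolynomial.totalDegree_det_le _ fun i j => totalDegree_pathPoly_le hdepth _ _).trans_eq
      (by rw [Fintype.card_fin])
  refine ⟨hne, hdeg, (MvPolynomial.card_zeros_div_card_le hne).trans ?_⟩
  gcongr
  exact_mod_cast hdeg
end

section
/- For every i ≥ 2 and every n ≥ 1, λ_{2i+1}(n) ≤ λ_{2i}(n) ≤ 2·λ_{2i+1}(n). -/
/-- `fstar f n = min {i : f^(i)(n) ≤ 1}`. -/
noncomputable def fstar (f : ℕ → ℕ) (n : ℕ) : ℕ := sInf {i | f^[i] n ≤ 1}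

/-- The inverse-Ackermann-type functions: `lam 1 n = ⌊√n⌋`, `lam 2 n = ⌈log₂ n⌉`,
`lam (d) = (lam (d-2))*` for `d ≥ 3`. -/
noncomputable def lam : ℕ → ℕ → ℕ
  | 0 => fun _ => 0
  | 1 => Nat.sqrt
  | 2 => Nat.clog 2
  | d + 3 => fstar (lam (d + 1))

/-!
Write `g = λ_{2i}` and `f = λ_{2i+1}`. The relations `g ∘ g ≤ f ≤ g` and `g (2m) ≤ m` pass from
`(g, f)` to `(g*, f*)`: `f ≤ g` gives `f* ≤ g*`, two steps of `g` do at most one step of `f`, so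
`g* ≤ 2 f*`, and `g* (2m) ≤ g* m + 1 ≤ m`, whence `g* (g* n) ≤ g* (2 f* n) ≤ f* n`. For the base pair
`(⌈log₂⌉, √*)` everything follows from `n < 2 ^ 2 ^ (√* n)` and `√* n ≤ ⌈log₂ n⌉`.
-/

structure Shrinking (f : ℕ → ℕ) : Prop where
  mono : Monotone f
  lt_self : ∀ ⦃x⦄, 2 ≤ x → f x < x
  le_one : f 1 ≤ 1

namespace Shrinking

variable {f : ℕ → ℕ}

lemma iterate_le_max (hf : Shrinking f) (n k : ℕ) : f^[k] n ≤ max 1 (n - k) := by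
  induction k with
  | zero => simp
  | succ k ih =>
    rw [Function.iterate_succ_apply']
    rcases le_or_gt (f^[k] n) 1 with h | h
    · exact le_max_of_le_left ((hf.mono h).trans hf.le_one)
    · have := hf.lt_self h
      omega

lemma iterate_le_one (hf : Shrinking f) {n k : ℕ} (hk : n - 1 ≤ k) : f^[k] n ≤ 1 :=
  (hf.iterate_le_max n k).trans (by omega)

end Shrinking

section Fstar

variable {f g : ℕ → ℕ}

lemma fstar_le_of_iterate_le_one {n k : ℕ} (h : f^[k] n ≤ 1) : fstar f n ≤ k :=
  Nat.sInf_le h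

lemma fstar_of_le_one {n : ℕ} (hn : n ≤ 1) : fstar f n = 0 :=
  Nat.le_zero.mp (fstar_le_of_iterate_le_one hn)

lemma iterate_fstar_le_one (hf : Shrinking f) (n : ℕ) : f^[fstar f n] n ≤ 1 :=
  Nat.sInf_mem (s := {i | f^[i] n ≤ 1}) ⟨n - 1, hf.iterate_le_one le_rfl⟩

lemma fstar_le_pred (hf : Shrinking f) (n : ℕ) : fstar f n ≤ n - 1 :=
  fstar_le_of_iterate_le_one (hf.iterate_le_one le_rfl)

lemma fstar_mono (hf : Shrinking f) : Monotone (fstar f) := fun _ n hmn =>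
  fstar_le_of_iterate_le_one ((hf.mono.iterate _ hmn).trans (iterate_fstar_le_one hf n))

lemma Shrinking.fstar (hf : Shrinking f) : Shrinking (fstar f) where
  mono := fstar_mono hf
  lt_self x hx := by have := fstar_le_pred hf x; omega
  le_one := (fstar_of_le_one le_rfl).trans_le zero_le_one

lemma fstar_eq_fstar_map_add_one (hf : Shrinking f) {n : ℕ} (hn : 2 ≤ n) :
    fstar f n = fstar f (f n) + 1 := by
  apply le_antisymm
  · exact fstar_le_of_iterate_le_one (iterate_fstar_le_one hf (f n))
  · obtain ⟨k, hk⟩ : ∃ k, fstar f n = k + 1 := by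
      refine Nat.exists_eq_add_one.mpr (Nat.pos_of_ne_zero fun h0 => ?_)
      have := iterate_fstar_le_one hf n
      rw [h0, Function.iterate_zero_apply] at this
      omega
    have := iterate_fstar_le_one hf n
    rw [hk, Function.iterate_succ_apply] at this
    have := fstar_le_of_iterate_le_one this
    omega

lemma fstar_le_fstar (hf : Monotone f) (hg : Shrinking g) (hfg : f ≤ g) : fstar f ≤ fstar g :=
  fun n => fstar_le_of_iterate_le_one
    ((hf.iterate_le_of_le hfg _ n).trans (iterate_fstar_le_one hg n))

lemma fstar_le_two_mul_fstar (hf : Monotone f) (hg : Shrinking g) (hfg : f ∘ f ≤ g) (n : ℕ) :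
    fstar f n ≤ 2 * fstar g n := by
  apply fstar_le_of_iterate_le_one
  rw [Function.iterate_mul]
  exact ((hf.iterate 2).iterate_le_of_le hfg _ n).trans (iterate_fstar_le_one hg n)

lemma fstar_two_mul_le (hg : Shrinking g) (hg2 : ∀ m, g (2 * m) ≤ m) (m : ℕ) :
    fstar g (2 * m) ≤ m := by
  rcases Nat.eq_zero_or_pos m with rfl | hm
  · exact (fstar_of_le_one zero_le_one).le
  · rw [fstar_eq_fstar_map_add_one hg (by omega)]
    have := fstar_mono hg (hg2 m)
    have := fstar_le_pred hg m
    omega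

end Fstar

lemma shrinking_sqrt : Shrinking Nat.sqrt where
  mono _ _ h := Nat.sqrt_le_sqrt h
  lt_self _ hx := Nat.sqrt_lt_self hx
  le_one := by simp

lemma two_mul_le_two_pow (m : ℕ) : 2 * m ≤ 2 ^ m := by
  rcases Nat.eq_zero_or_pos m with rfl | hm
  · simp
  · obtain ⟨k, rfl⟩ : ∃ k, m = k + 1 := ⟨m - 1, by omega⟩
    have := k.lt_two_pow_self
    rw [pow_succ]
    omega

lemma clog_two_mul_le (m : ℕ) : Nat.clog 2 (2 * m) ≤ m :=
  (Nat.clog_le_iff_le_pow one_lt_two).mpr (two_mul_le_two_pow m)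

lemma shrinking_clog : Shrinking (Nat.clog 2) where
  mono := Nat.clog_monotone 2
  lt_self x hx := by
    have := clog_two_mul_le (x - 1)
    have := Nat.clog_mono_right 2 (show x ≤ 2 * (x - 1) by omega)
    omega
  le_one := by simp

lemma lt_two_pow_two_pow_fstar_sqrt (n : ℕ) : n < 2 ^ 2 ^ fstar Nat.sqrt n := by
  induction n using Nat.strong_induction_on with
  | _ n ih =>
    rcases le_or_gt n 1 with h1 | h1
    · rw [fstar_of_le_one h1]
      omega
    · have hle : Nat.sqrt n + 1 ≤ 2 ^ 2 ^ fstar Nat.sqrt (Nat.sqrt n) :=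
        ih _ (Nat.sqrt_lt_self h1)
      calc n < (Nat.sqrt n + 1) * (Nat.sqrt n + 1) := Nat.lt_succ_sqrt n
        _ ≤ 2 ^ 2 ^ fstar Nat.sqrt (Nat.sqrt n) * 2 ^ 2 ^ fstar Nat.sqrt (Nat.sqrt n) :=
          Nat.mul_le_mul hle hle
        _ = 2 ^ 2 ^ fstar Nat.sqrt n := by
          rw [fstar_eq_fstar_map_add_one shrinking_sqrt h1, ← pow_add, pow_succ, mul_two]

lemma clog_clog_le_fstar_sqrt (n : ℕ) : Nat.clog 2 (Nat.clog 2 n) ≤ fstar Nat.sqrt n := by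
  have h : Nat.clog 2 n ≤ 2 ^ fstar Nat.sqrt n :=
    (Nat.clog_le_iff_le_pow one_lt_two).mpr (lt_two_pow_two_pow_fstar_sqrt n).le
  exact (Nat.clog_le_iff_le_pow one_lt_two).mpr h

lemma fstar_sqrt_le_clog (n : ℕ) : fstar Nat.sqrt n ≤ Nat.clog 2 n := by
  induction n using Nat.strong_induction_on with
  | _ n ih =>
    rcases le_or_gt n 1 with h1 | h1
    · rw [fstar_of_le_one h1]
      omega
    · have hsqrt : Nat.sqrt n ≤ (n + 1) / 2 := by
        have : 2 * Nat.sqrt n ≤ n + 1 := by nlinarith [Nat.sqrt_le n]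
        omega
      calc fstar Nat.sqrt n = fstar Nat.sqrt (Nat.sqrt n) + 1 :=
            fstar_eq_fstar_map_add_one shrinking_sqrt h1
        _ ≤ fstar Nat.sqrt ((n + 1) / 2) + 1 := by
            have := fstar_mono shrinking_sqrt hsqrt
            omega
        _ ≤ Nat.clog 2 ((n + 1) / 2) + 1 := by
            have := ih ((n + 1) / 2) (by omega)
            omega
        _ = Nat.clog 2 n := by
            simpa using (Nat.clog_of_two_le one_lt_two h1).symm

structure TwoStep (g f : ℕ → ℕ) : Prop where
  shrinking_left : Shrinking g
  shrinking_right : Shrinking f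
  le : f ≤ g
  comp_le : g ∘ g ≤ f
  map_two_mul_le : ∀ m, g (2 * m) ≤ m

lemma TwoStep.fstar {g f : ℕ → ℕ} (h : TwoStep g f) : TwoStep (fstar g) (fstar f) where
  shrinking_left := h.shrinking_left.fstar
  shrinking_right := h.shrinking_right.fstar
  le := fstar_le_fstar h.shrinking_right.mono h.shrinking_left h.le
  comp_le n := (fstar_mono h.shrinking_left
      (fstar_le_two_mul_fstar h.shrinking_left.mono h.shrinking_right h.comp_le n)).trans
    (fstar_two_mul_le h.shrinking_left h.map_two_mul_le _)
  map_two_mul_le := fstar_two_mul_le h.shrinking_left h.map_two_mul_le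

lemma twoStep_clog_fstar_sqrt : TwoStep (Nat.clog 2) (fstar Nat.sqrt) where
  shrinking_left := shrinking_clog
  shrinking_right := shrinking_sqrt.fstar
  le := fstar_sqrt_le_clog
  comp_le := clog_clog_le_fstar_sqrt
  map_two_mul_le := clog_two_mul_le

lemma lam_add_two {d : ℕ} (hd : 1 ≤ d) : lam (d + 2) = fstar (lam d) := by
  obtain ⟨e, rfl⟩ : ∃ e, d = e + 1 := ⟨d - 1, by omega⟩
  rfl

lemma lam_even_succ (i : ℕ) (hi : 1 ≤ i) :
    lam (2 * (i + 1)) = fstar (lam (2 * i)) ∧ lam (2 * (i + 1) + 1) = fstar (lam (2 * i + 1)) :=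
  ⟨lam_add_two (d := 2 * i) (by omega), lam_add_two (d := 2 * i + 1) (by omega)⟩

lemma twoStep_lam {i : ℕ} (hi : 1 ≤ i) : TwoStep (lam (2 * i)) (lam (2 * i + 1)) := by
  induction i, hi using Nat.le_induction with
  | base => exact twoStep_clog_fstar_sqrt
  | succ i hi ih =>
    obtain ⟨h_even, h_odd⟩ := lam_even_succ i hi
    rw [h_even, h_odd]
    exact ih.fstar

theorem stmt_18 : ∀ i : ℕ, 2 ≤ i → ∀ n : ℕ, 1 ≤ n →
    lam (2 * i + 1) n ≤ lam (2 * i) n ∧ lam (2 * i) n ≤ 2 * lam (2 * i + 1) n := by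
  intro i hi n _
  obtain ⟨j, rfl⟩ : ∃ j, i = j + 1 := ⟨i - 1, by omega⟩
  have h := twoStep_lam (i := j) (by omega)
  obtain ⟨h_even, h_odd⟩ := lam_even_succ j (by omega)
  rw [h_even, h_odd]
  exact ⟨h.fstar.le n,
    fstar_le_two_mul_fstar h.shrinking_left.mono h.shrinking_right h.comp_le n⟩
end
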